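/- (RIP operator-form inequality) Suppose the measurement map 𝒜 satisfies the (2r, δ)-RIP. Then for any ρ ∈ ℂ^{D×D} with rank(ρ) ≤ r and any B ∈ ℂ^{D×r}, ‖(D/K)·Σ_{k=1}^K trace(A_k ρ)·A_k·B − ρ·B‖_F ≤ 2δ·‖ρ‖_F·‖B‖, where ‖B‖ denotes the spectral norm of B. -/

import Mathlib

open Matrix
open scoped BigOperators ComplexOrder

/-- Frobenius norm of a complex matrix. -/
noncomputable def frobNorm {m n : ℕ} (A : Matrix (Fin m) (Fin n) ℂ) : ℝ :=
  Real.sqrt (∑ i, ∑ j, ‖A i j‖ ^ 2)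

/-- Spectral norm (largest singular value) of a complex matrix, as the operator
norm of the induced map between Euclidean spaces. -/
noncomputable def specNorm {m n : ℕ} (A : Matrix (Fin m) (Fin n) ℂ) : ℝ :=
  ‖LinearMap.toContinuousLinearMap (Matrix.toEuclideanLin A)‖

/-- The measurement map `𝒜(ρ)_k = trace (A k * ρ)` satisfies the `(s, δ)`-RIP. -/
def IsRIP {D K : ℕ} (A : Fin K → Matrix (Fin D) (Fin D) ℂ) (s : ℕ) (δ : ℝ) : Prop :=
  ∀ ρ : Matrix (Fin D) (Fin D) ℂ, ρ.rank ≤ s →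
    (1 - δ) * frobNorm ρ ^ 2 ≤ ((D : ℝ) / (K : ℝ)) * ∑ k, ‖Matrix.trace (A k * ρ)‖ ^ 2 ∧
      ((D : ℝ) / (K : ℝ)) * ∑ k, ‖Matrix.trace (A k * ρ)‖ ^ 2 ≤ (1 + δ) * frobNorm ρ ^ 2

/-- The adjoint of the measurement map: `𝒜*(e) = Σ_k e_k A_k`. -/
noncomputable def adjointMap {D K : ℕ} (A : Fin K → Matrix (Fin D) (Fin D) ℂ)
    (e : Fin K → ℝ) : Matrix (Fin D) (Fin D) ℂ :=
  ∑ k, (e k : ℂ) • A k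

/-- The Wirtinger gradient `G(U) = (D/K) Σ_k (trace(A_k U Uᴴ) − ŷ_k) A_k U`. -/
noncomputable def wGrad {D K r : ℕ} (A : Fin K → Matrix (Fin D) (Fin D) ℂ)
    (yhat : Fin K → ℝ) (U : Matrix (Fin D) (Fin r) ℂ) : Matrix (Fin D) (Fin r) ℂ :=
  ((D : ℂ) / (K : ℂ)) • ∑ k, (Matrix.trace (A k * (U * Uᴴ)) - (yhat k : ℂ)) • (A k * U)

/-- The Wirtinger Hessian quadratic form at `U` in direction `Δ`. -/
noncomputable def wHess {D K r : ℕ} (A : Fin K → Matrix (Fin D) (Fin D) ℂ)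
    (yhat : Fin K → ℝ) (U Δ : Matrix (Fin D) (Fin r) ℂ) : ℝ :=
  (2 * (D : ℝ) / (K : ℝ)) * ∑ k, (‖Matrix.trace (A k * (U * Δᴴ))‖ ^ 2
      + ((Matrix.trace (A k * (U * Δᴴ))) ^ 2).re)
    + (2 * (D : ℝ) / (K : ℝ)) *
      (Matrix.trace ((∑ k, (Matrix.trace (A k * (U * Uᴴ)) - (yhat k : ℂ)) • A k)
        * (Δ * Δᴴ))).re

/-- The function `h(δ)` from the recovery-error bound. -/
noncomputable def hfun (δ : ℝ) : ℝ :=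
  (Real.sqrt 2 + Real.sqrt (82.55 - 762.54 * δ - 843.09 * δ ^ 2)) / (1.5 - 15.7 * δ)

/-- The smallest singular value `σ_r(X)`: the square root of the smallest
eigenvalue of `Xᴴ X`. -/
noncomputable def sigmaMin {D r : ℕ} (X : Matrix (Fin D) (Fin r) ℂ) : ℝ :=
  Real.sqrt (⨅ i : Fin r, (Matrix.isHermitian_conjTranspose_mul_self X).eigenvalues i)

/-!
Write `M = (D/K) 𝒜*𝒜(ρ) - ρ` and `G = M B`. Adjointness of right multiplication by `B` gives
`‖G‖_F² = Re ⟨M, G Bᴴ⟩ = (D/K) Re ⟨𝒜 ρ, 𝒜 (G Bᴴ)⟩ - Re ⟨ρ, G Bᴴ⟩`. Both `ρ` and `G Bᴴ` have rank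
at most `r`, so every linear combination of them has rank at most `2r`, and polarizing the RIP
over these combinations bounds the right-hand side by `δ ‖ρ‖_F ‖G Bᴴ‖_F ≤ δ ‖ρ‖_F ‖G‖_F ‖B‖`.
Dividing by `‖G‖_F` gives `‖G‖_F ≤ δ ‖ρ‖_F ‖B‖`.
-/

open scoped InnerProductSpace

section Polarization

variable {𝕜 E F : Type*} [RCLike 𝕜] [NormedAddCommGroup E] [InnerProductSpace 𝕜 E]
  [NormedAddCommGroup F] [InnerProductSpace 𝕜 F]

open RCLike

theorem re_inner_sub_re_inner_le_of_norm_sq_le {c δ : ℝ} {x y : E} {u w : F}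
    (hadd : c * ‖u + w‖ ^ 2 ≤ (1 + δ) * ‖x + y‖ ^ 2)
    (hsub : (1 - δ) * ‖x - y‖ ^ 2 ≤ c * ‖u - w‖ ^ 2) :
    c * re ⟪u, w⟫_𝕜 - re ⟪x, y⟫_𝕜 ≤ δ / 2 * (‖x‖ ^ 2 + ‖y‖ ^ 2) := by
  rw [@norm_add_sq 𝕜, @norm_add_sq 𝕜] at hadd
  rw [@norm_sub_sq 𝕜, @norm_sub_sq 𝕜] at hsub
  linarith

theorem re_inner_sub_re_inner_le_of_forall {c δ : ℝ} {x y : E} {u w : F}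
    (h : ∀ a b : ℝ,
      (1 - δ) * ‖(a : 𝕜) • x + (b : 𝕜) • y‖ ^ 2 ≤ c * ‖(a : 𝕜) • u + (b : 𝕜) • w‖ ^ 2 ∧
        c * ‖(a : 𝕜) • u + (b : 𝕜) • w‖ ^ 2 ≤ (1 + δ) * ‖(a : 𝕜) • x + (b : 𝕜) • y‖ ^ 2) :
    c * re ⟪u, w⟫_𝕜 - re ⟪x, y⟫_𝕜 ≤ δ * ‖x‖ * ‖y‖ := by
  rcases eq_or_ne x 0 with rfl | hx
  · obtain ⟨h₁, h₂⟩ := h 1 0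
    simp only [ofReal_one, ofReal_zero, one_smul, zero_smul, add_zero, norm_zero] at h₁ h₂
    have hcu : c = 0 ∨ u = 0 := by simpa using le_antisymm (by linarith) h₁
    rcases hcu with rfl | rfl <;> simp
  rcases eq_or_ne y 0 with rfl | hy
  · obtain ⟨h₁, h₂⟩ := h 0 1
    simp only [ofReal_one, ofReal_zero, one_smul, zero_smul, zero_add, norm_zero] at h₁ h₂
    have hcw : c = 0 ∨ w = 0 := by simpa using le_antisymm (by linarith) h₁
    rcases hcw with rfl | rfl <;> simp
  -- Rescaled to `‖y‖ • x` and `‖x‖ • y`, the two vectors have equal norms, and then the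
  -- bound `δ / 2 * (‖x‖ ^ 2 + ‖y‖ ^ 2)` is `δ * ‖x‖ * ‖y‖` (AM-GM with equality).
  have key := re_inner_sub_re_inner_le_of_norm_sq_le (𝕜 := 𝕜) (x := (‖y‖ : 𝕜) • x)
    (y := (‖x‖ : 𝕜) • y) (u := (‖y‖ : 𝕜) • u) (w := (‖x‖ : 𝕜) • w) (h ‖y‖ ‖x‖).2
    (by simpa [sub_eq_add_neg] using (h ‖y‖ (-‖x‖)).1)
  simp only [inner_smul_left, inner_smul_right, conj_ofReal, ← mul_assoc, ← ofReal_mul,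
    re_ofReal_mul, norm_smul, norm_ofReal, abs_norm] at key
  refine le_of_mul_le_mul_left ?_ (mul_pos (norm_pos_iff.2 hx) (norm_pos_iff.2 hy))
  linear_combination key

end Polarization

namespace Matrix

variable {K : Type*} [Field K] {m n : Type*} [Fintype n]

theorem rank_add_le (X Y : Matrix m n K) : (X + Y).rank ≤ X.rank + Y.rank := by
  rw [rank, rank, rank, mulVecLin_add]
  exact (Submodule.finrank_mono (LinearMap.range_add_le _ _)).trans
    (Submodule.finrank_add_le_finrank_add_finrank _ _)

theorem rank_smul_le (c : K) (X : Matrix m n K) : (c • X).rank ≤ X.rank := by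
  have h : (c • X).mulVecLin = c • X.mulVecLin := LinearMap.ext fun v => smul_mulVec c X v
  rw [rank, rank, h]
  exact Submodule.finrank_mono (LinearMap.range_smul_le_range _ _)

end Matrix

open Matrix

noncomputable def frobVec {m n : ℕ} :
    Matrix (Fin m) (Fin n) ℂ →ₗ[ℂ] EuclideanSpace ℂ (Fin m × Fin n) where
  toFun X := WithLp.toLp 2 fun p => X p.1 p.2
  map_add' _ _ := rfl
  map_smul' _ _ := rfl

noncomputable def measVec {D K : ℕ} (A : Fin K → Matrix (Fin D) (Fin D) ℂ) :
    Matrix (Fin D) (Fin D) ℂ →ₗ[ℂ] EuclideanSpace ℂ (Fin K) where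
  toFun ρ := WithLp.toLp 2 fun k => trace (A k * ρ)
  map_add' ρ σ := by ext k; simp [Matrix.mul_add]
  map_smul' c ρ := by ext k; simp

theorem norm_frobVec {m n : ℕ} (X : Matrix (Fin m) (Fin n) ℂ) : ‖frobVec X‖ = frobNorm X := by
  rw [EuclideanSpace.norm_eq, frobNorm, ← Fintype.sum_prod_type']
  rfl

theorem inner_frobVec {m n : ℕ} (X Y : Matrix (Fin m) (Fin n) ℂ) :
    ⟪frobVec X, frobVec Y⟫_ℂ = trace (Xᴴ * Y) := by
  change ⟪WithLp.toLp 2 _, WithLp.toLp 2 _⟫_ℂ = _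
  simp only [EuclideanSpace.inner_toLp_toLp, dotProduct, Fintype.sum_prod_type, trace, diag_apply,
    mul_apply, conjTranspose_apply, Pi.star_apply, RCLike.star_def]
  rw [Finset.sum_comm]
  simp_rw [mul_comm]

theorem norm_measVec_sq {D K : ℕ} (A : Fin K → Matrix (Fin D) (Fin D) ℂ)
    (ρ : Matrix (Fin D) (Fin D) ℂ) : ‖measVec A ρ‖ ^ 2 = ∑ k, ‖trace (A k * ρ)‖ ^ 2 :=
  EuclideanSpace.norm_sq_eq _

theorem inner_frobVec_mul_right {m n p : ℕ} (X : Matrix (Fin m) (Fin n) ℂ)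
    (B : Matrix (Fin n) (Fin p) ℂ) (Y : Matrix (Fin m) (Fin p) ℂ) :
    ⟪frobVec (X * B), frobVec Y⟫_ℂ = ⟪frobVec X, frobVec (Y * Bᴴ)⟫_ℂ := by
  rw [inner_frobVec, inner_frobVec, conjTranspose_mul, Matrix.mul_assoc, trace_mul_comm,
    Matrix.mul_assoc, ← Matrix.mul_assoc, trace_mul_comm]

theorem inner_frobVec_residual {D K : ℕ} {A : Fin K → Matrix (Fin D) (Fin D) ℂ}
    (hA : ∀ k, (A k).IsHermitian) (ρ σ : Matrix (Fin D) (Fin D) ℂ) :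
    ⟪frobVec (((D : ℂ) / (K : ℂ)) • (∑ k, trace (A k * ρ) • A k) - ρ), frobVec σ⟫_ℂ =
      (D / K : ℂ) * ⟪measVec A ρ, measVec A σ⟫_ℂ - ⟪frobVec ρ, frobVec σ⟫_ℂ := by
  have hmeas : ⟪measVec A ρ, measVec A σ⟫_ℂ =
      ∑ k, starRingEnd ℂ (trace (A k * ρ)) * trace (A k * σ) := by
    change ⟪WithLp.toLp 2 _, WithLp.toLp 2 _⟫_ℂ = _
    simp only [EuclideanSpace.inner_toLp_toLp, dotProduct, Pi.star_apply, RCLike.star_def,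
      mul_comm]
  have hA' : ∀ k, ⟪frobVec (A k), frobVec σ⟫_ℂ = trace (A k * σ) := fun k => by
    rw [inner_frobVec, (hA k).eq]
  simp only [map_sub, map_smul, map_sum, inner_sub_left, inner_smul_left, sum_inner, hA', hmeas,
    map_div₀, map_natCast]

theorem IsRIP.re_inner_sub_re_inner_le {D K r : ℕ} {A : Fin K → Matrix (Fin D) (Fin D) ℂ} {δ : ℝ}
    (hRIP : IsRIP A (2 * r) δ) {ρ σ : Matrix (Fin D) (Fin D) ℂ} (hρ : ρ.rank ≤ r)
    (hσ : σ.rank ≤ r) :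
    (D / K : ℝ) * (⟪measVec A ρ, measVec A σ⟫_ℂ).re - (⟪frobVec ρ, frobVec σ⟫_ℂ).re ≤
      δ * frobNorm ρ * frobNorm σ := by
  rw [← norm_frobVec, ← norm_frobVec]
  refine re_inner_sub_re_inner_le_of_forall (𝕜 := ℂ) fun a b => ?_
  have hrank : ((a : ℂ) • ρ + (b : ℂ) • σ).rank ≤ 2 * r := by
    have := rank_add_le ((a : ℂ) • ρ) ((b : ℂ) • σ)
    have := rank_smul_le (a : ℂ) ρ
    have := rank_smul_le (b : ℂ) σ
    omega
  rw [← map_smul, ← map_smul, ← map_add, ← map_smul, ← map_smul, ← map_add, norm_frobVec,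
    norm_measVec_sq]
  exact hRIP _ hrank

theorem frobNorm_nonneg {m n : ℕ} (X : Matrix (Fin m) (Fin n) ℂ) : 0 ≤ frobNorm X :=
  Real.sqrt_nonneg _

theorem specNorm_nonneg {m n : ℕ} (B : Matrix (Fin m) (Fin n) ℂ) : 0 ≤ specNorm B :=
  norm_nonneg _

theorem frobNorm_conjTranspose {m n : ℕ} (X : Matrix (Fin m) (Fin n) ℂ) :
    frobNorm Xᴴ = frobNorm X := by
  simp only [frobNorm, conjTranspose_apply, norm_star]
  rw [Finset.sum_comm]

theorem frobNorm_sq_eq_sum_norm_col {m n : ℕ} (X : Matrix (Fin m) (Fin n) ℂ) :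
    frobNorm X ^ 2 = ∑ j, ‖(WithLp.toLp 2 fun i => X i j : EuclideanSpace ℂ (Fin m))‖ ^ 2 := by
  rw [frobNorm, Real.sq_sqrt (by positivity), Finset.sum_comm]
  simp only [EuclideanSpace.norm_sq_eq]

theorem norm_toLp_mulVec_le {m n : ℕ} (B : Matrix (Fin m) (Fin n) ℂ) (v : Fin n → ℂ) :
    ‖(WithLp.toLp 2 (B *ᵥ v) : EuclideanSpace ℂ (Fin m))‖ ≤
      specNorm B * ‖(WithLp.toLp 2 v : EuclideanSpace ℂ (Fin n))‖ :=
  (toEuclideanLin B).toContinuousLinearMap.le_opNorm (WithLp.toLp 2 v)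

theorem frobNorm_mul_le {m n p : ℕ} (B : Matrix (Fin m) (Fin n) ℂ) (Y : Matrix (Fin n) (Fin p) ℂ) :
    frobNorm (B * Y) ≤ specNorm B * frobNorm Y := by
  refine (pow_le_pow_iff_left₀ (frobNorm_nonneg _)
    (mul_nonneg (specNorm_nonneg B) (frobNorm_nonneg Y)) two_ne_zero).1 ?_
  rw [frobNorm_sq_eq_sum_norm_col, mul_pow, frobNorm_sq_eq_sum_norm_col, Finset.mul_sum]
  refine Finset.sum_le_sum fun j _ => ?_
  rw [← mul_pow]
  exact pow_le_pow_left₀ (norm_nonneg _) (norm_toLp_mulVec_le B fun k => Y k j) 2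

theorem frobNorm_mul_conjTranspose_le {m n p : ℕ} (X : Matrix (Fin m) (Fin n) ℂ)
    (B : Matrix (Fin p) (Fin n) ℂ) : frobNorm (X * Bᴴ) ≤ frobNorm X * specNorm B := by
  rw [← frobNorm_conjTranspose, conjTranspose_mul, conjTranspose_conjTranspose, mul_comm,
    ← frobNorm_conjTranspose X]
  exact frobNorm_mul_le B Xᴴ

theorem stmt_13_general {D K r : ℕ}
    (A : Fin K → Matrix (Fin D) (Fin D) ℂ) (hA : ∀ k, (A k).IsHermitian)
    (δ : ℝ) (hδ0 : 0 ≤ δ) (hRIP : IsRIP A (2 * r) δ)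
    (ρ : Matrix (Fin D) (Fin D) ℂ) (hρ : ρ.rank ≤ r)
    (B : Matrix (Fin D) (Fin r) ℂ) :
    frobNorm (((D : ℂ) / (K : ℂ)) • ((∑ k, Matrix.trace (A k * ρ) • A k) * B) - ρ * B) ≤
      2 * δ * frobNorm ρ * specNorm B := by
  rw [← smul_mul, ← Matrix.sub_mul]
  set M := ((D : ℂ) / (K : ℂ)) • (∑ k, trace (A k * ρ) • A k) - ρ
  have hσ : (M * B * Bᴴ).rank ≤ r :=
    (rank_mul_le_right _ _).trans ((rank_conjTranspose B).trans_le (rank_le_width B))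
  have hsq : frobNorm (M * B) ^ 2 ≤ δ * frobNorm ρ * frobNorm (M * B * Bᴴ) := by
    have hDK : (D / K : ℂ) = ((D / K : ℝ) : ℂ) := by push_cast; rfl
    rw [← norm_frobVec, ← inner_self_eq_norm_sq (𝕜 := ℂ), inner_frobVec_mul_right,
      inner_frobVec_residual hA, hDK, RCLike.re_to_complex, Complex.sub_re, Complex.re_ofReal_mul]
    exact hRIP.re_inner_sub_re_inner_le hρ hσ
  have hδρ : 0 ≤ δ * frobNorm ρ := mul_nonneg hδ0 (frobNorm_nonneg ρ)
  have hle : frobNorm (M * B) ≤ δ * frobNorm ρ * specNorm B := by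
    nlinarith [frobNorm_nonneg (M * B), mul_nonneg hδρ (specNorm_nonneg B),
      mul_le_mul_of_nonneg_left (frobNorm_mul_conjTranspose_le (M * B) B) hδρ]
  linarith [mul_nonneg hδρ (specNorm_nonneg B)]

/-- RIP operator-form inequality. -/
theorem stmt_13 {D K r : ℕ} (hD : 0 < D) (hK : 0 < K) (hr : 0 < r) (hrD : r ≤ D)
    (A : Fin K → Matrix (Fin D) (Fin D) ℂ) (hA : ∀ k, (A k).IsHermitian)
    (δ : ℝ) (hδ0 : 0 ≤ δ) (hδ1 : δ < 1) (hRIP : IsRIP A (2 * r) δ)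
    (ρ : Matrix (Fin D) (Fin D) ℂ) (hρ : ρ.rank ≤ r)
    (B : Matrix (Fin D) (Fin r) ℂ) :
    frobNorm (((D : ℂ) / (K : ℂ)) • ((∑ k, Matrix.trace (A k * ρ) • A k) * B) - ρ * B) ≤
      2 * δ * frobNorm ρ * specNorm B :=
  stmt_13_general A hA δ hδ0 hRIP ρ hρ B
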